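/- arXiv:math/0605246 — 2 statements merged into one kernel-verified Lean document; each statement's English description precedes it below -/
import Mathlib

section
/- Let u, v be non-adjacent distinct vertices of {0,1}^d (Hamming distance ≥ 2), and let x be uniform over {0,1}^d. Then Pr[|δ(x,u) − δ(x,v)| ≤ 1] ≤ 3/4. -/
/-!
Pick two coordinates `i ≠ j` where `u` and `v` differ, and write `D x = δ(x,u) - δ(x,v)`.
Flipping bit `i` (or `j`) of `x` changes `D x` by `±2`, so the four points obtained from `x` by
flipping any subset of `{i, j}` have `D`-values `D x, D x + s, D x + t, D x + s + t` with
`s, t ∈ {±2}`; two of these differ by `4`, so at most three of the four lie in `|D| ≤ 1`.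
Since each flip is a bijection of the cube, double counting gives `4 · #{|D| ≤ 1} ≤ 3 · 2^d`.
-/

open Finset Function

lemma card_mul_card_le_of_card_filter_perm_mem_le {α ι : Type*} [Fintype α] [DecidableEq α]
    [Fintype ι] (A : Finset α) (σ : ι → Equiv.Perm α) (m : ℕ)
    (h : ∀ x, #{k | σ k x ∈ A} ≤ m) :
    Fintype.card ι * #A ≤ m * Fintype.card α := by
  have hA : ∀ k, #A = ∑ x, if σ k x ∈ A then 1 else 0 := fun k => by
    rw [Equiv.sum_comp (σ k) (fun y => if y ∈ A then 1 else 0), ← card_filter,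
      filter_mem_eq_inter, univ_inter]
  calc Fintype.card ι * #A = ∑ k, ∑ x, if σ k x ∈ A then 1 else 0 := by
        simp only [← hA, sum_const, card_univ, smul_eq_mul]
    _ = ∑ x, #{k | σ k x ∈ A} := by rw [sum_comm]; simp only [card_filter]
    _ ≤ ∑ _x : α, m := sum_le_sum fun x _ => h x
    _ = m * Fintype.card α := by rw [sum_const, card_univ, smul_eq_mul, mul_comm]

lemma hammingDist_update_add {ι : Type*} {β : ι → Type*} [Fintype ι] [DecidableEq ι]
    [∀ i, DecidableEq (β i)] (x y : ∀ i, β i) (i : ι) (b : β i) :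
    hammingDist (update x i b) y + (if x i ≠ y i then 1 else 0) =
      hammingDist x y + (if b ≠ y i then 1 else 0) := by
  have hupd : (fun k => if update x i b k ≠ y k then 1 else 0) =
      update (fun k => if x k ≠ y k then 1 else 0) i (if b ≠ y i then 1 else 0) := by
    funext k; by_cases hk : k = i
    · subst hk; simp
    · simp [hk]
  simp only [hammingDist, card_filter, hupd, sum_update_of_mem (mem_univ i)]
  rw [← add_sum_erase _ _ (mem_univ i), sdiff_singleton_eq_erase]
  ring

section

variable {ι : Type*} [DecidableEq ι]

def flipBit (i : ι) : Equiv.Perm (ι → Bool) :=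
  Involutive.toPerm (fun x => update x i (!x i)) fun x => by simp

lemma flipBit_apply (i : ι) (x : ι → Bool) : flipBit i x = update x i (!x i) := rfl

lemma flipBit_apply_of_ne {i j : ι} (h : j ≠ i) (x : ι → Bool) : flipBit i x j = x j := by
  simp [flipBit_apply, h]

variable [Fintype ι]

lemma hammingDist_sub_hammingDist_flipBit {u v : ι → Bool} {i : ι} (hi : u i ≠ v i)
    (x : ι → Bool) :
    (hammingDist (flipBit i x) u : ℤ) - hammingDist (flipBit i x) v =
      hammingDist x u - hammingDist x v + if x i = u i then 2 else -2 := by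
  have hu := hammingDist_update_add x u i (!x i)
  have hv := hammingDist_update_add x v i (!x i)
  rw [flipBit_apply]
  cases hx : x i <;> cases hu' : u i <;> cases hv' : v i <;> simp_all <;> omega

lemma not_forall_abs_sub_hammingDist_le_one {u v : ι → Bool} {i j : ι} (hij : i ≠ j)
    (hi : u i ≠ v i) (hj : u j ≠ v j) (x : ι → Bool) :
    ¬ (|(hammingDist x u : ℤ) - hammingDist x v| ≤ 1 ∧
      |(hammingDist (flipBit i x) u : ℤ) - hammingDist (flipBit i x) v| ≤ 1 ∧
      |(hammingDist (flipBit j x) u : ℤ) - hammingDist (flipBit j x) v| ≤ 1 ∧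
      |(hammingDist (flipBit i (flipBit j x)) u : ℤ) -
        hammingDist (flipBit i (flipBit j x)) v| ≤ 1) := by
  rw [hammingDist_sub_hammingDist_flipBit hi, hammingDist_sub_hammingDist_flipBit hi,
    hammingDist_sub_hammingDist_flipBit hj, flipBit_apply_of_ne hij]
  simp only [abs_le]
  split_ifs <;> omega

end

theorem prob_close_le_three_quarters (d : ℕ) (u v : Fin d → Bool)
    (h2 : 2 ≤ hammingDist u v) :
    ((Finset.univ.filter fun x : Fin d → Bool =>
        |(hammingDist x u : ℤ) - (hammingDist x v : ℤ)| ≤ 1).card : ℚ) / 2 ^ d ≤ 3 / 4 := by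
  set A := univ.filter fun x : Fin d → Bool =>
    |(hammingDist x u : ℤ) - (hammingDist x v : ℤ)| ≤ 1
  obtain ⟨i, hi, j, hj, hij⟩ := one_lt_card.mp h2
  simp only [mem_filter, mem_univ, true_and] at hi hj
  set σ : Fin 4 → Equiv.Perm (Fin d → Bool) :=
    ![1, flipBit i, flipBit j, flipBit i * flipBit j]
  have hcount := card_mul_card_le_of_card_filter_perm_mem_le A σ 3 fun x => by
    obtain ⟨k, hk⟩ : ∃ k, σ k x ∉ A := by
      by_contra! hall
      apply not_forall_abs_sub_hammingDist_le_one hij hi hj x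
      simpa [Fin.forall_fin_succ, σ, A] using hall
    have := card_lt_univ_of_notMem (s := {k | σ k x ∈ A}) (x := k) (by simpa using hk)
    rwa [Fintype.card_fin, Nat.lt_succ_iff] at this
  simp only [Fintype.card_fin, Fintype.card_pi, Fintype.card_bool, prod_const, card_univ]
    at hcount
  rw [div_le_iff₀ (by positivity)]
  have : (4 * #A : ℚ) ≤ 3 * 2 ^ d := by exact_mod_cast hcount
  linarith
end

section
/- There exists a constant c such that for all sufficiently large d, there is a set S ⊆ {0,1}^d with |S| ≤ c·d/log d satisfying: for every pair of non-adjacent vertices u, v of H_d (Hamming distance ≥ 2), there exists x ∈ S with |δ(x,u) − δ(x,v)| ≥ 2. -/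
/-!
Choose `m ≈ 32 d / log d` points `x₁, …, x_m` of the cube uniformly at random. If `u` and `v`
differ exactly on a set `D` of size `k ≥ 2`, then `δ(x, u) - δ(x, v) = k - 2a`, where `a` is the
number of coordinates of `D` on which `x` agrees with `u`. Since `a` is binomial `Bin(k, 1/2)`,
a single `x` fails to separate `u` from `v` with probability `q_k = C(2⌈k/2⌉, ⌈k/2⌉) / 2^k`,
which is at most `3/4` and at most `2/√k`. The failure event only depends on the partial
assignment `u|_D`, so a union bound over the `3^d` partial assignments suffices: for `k ≤ √d`
one has `q_k^m ≤ (2^{-(L+4)})^k` with `L = ⌊log d⌋`, and these weights sum to at most `1/3`;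
for `k > √d` one has `q_k ≤ 2 d^{-1/4}`, hence `q_k^m ≤ 8^{-d}`, which beats the `3^d` count.
-/

open Finset

namespace Nat

theorem centralBinom_sq_mul_le (n : ℕ) : n.centralBinom ^ 2 * (3 * n + 1) ≤ 16 ^ n := by
  induction n with
  | zero => simp
  | succ n ih =>
    have hstep : (2 * (2 * n + 1)) ^ 2 * (3 * n + 4) ≤ 16 * (n + 1) ^ 2 * (3 * n + 1) := by
      nlinarith
    refine Nat.le_of_mul_le_mul_left ?_ (pow_pos n.succ_pos 2)
    calc (n + 1) ^ 2 * ((n + 1).centralBinom ^ 2 * (3 * (n + 1) + 1))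
        = ((n + 1) * (n + 1).centralBinom) ^ 2 * (3 * n + 4) := by ring
      _ = (2 * (2 * n + 1)) ^ 2 * (3 * n + 4) * n.centralBinom ^ 2 := by
        rw [succ_mul_centralBinom_succ]; ring
      _ ≤ 16 * (n + 1) ^ 2 * (3 * n + 1) * n.centralBinom ^ 2 := by gcongr
      _ = 16 * (n + 1) ^ 2 * (n.centralBinom ^ 2 * (3 * n + 1)) := by ring
      _ ≤ 16 * (n + 1) ^ 2 * 16 ^ n := by gcongr
      _ = (n + 1) ^ 2 * 16 ^ (n + 1) := by ring

theorem centralBinom_half_sq_mul_le (k : ℕ) :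
    ((k + 1) / 2).centralBinom ^ 2 * k ≤ 4 ^ (k + 1) :=
  calc ((k + 1) / 2).centralBinom ^ 2 * k
      ≤ ((k + 1) / 2).centralBinom ^ 2 * (3 * ((k + 1) / 2) + 1) := by gcongr; omega
    _ ≤ 16 ^ ((k + 1) / 2) := centralBinom_sq_mul_le _
    _ = 4 ^ (2 * ((k + 1) / 2)) := by rw [pow_mul]; norm_num
    _ ≤ 4 ^ (k + 1) := Nat.pow_le_pow_right (by norm_num) (by omega)

theorem four_mul_centralBinom_half_le {k : ℕ} (hk : 2 ≤ k) :
    4 * ((k + 1) / 2).centralBinom ≤ 3 * 2 ^ k := by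
  rcases lt_or_ge k 8 with hk8 | hk8
  · interval_cases k <;> decide
  · have h := centralBinom_half_sq_mul_le k
    refine (Nat.pow_le_pow_iff_left (n := 2) two_ne_zero).mp ?_
    have e : (3 * 2 ^ k) ^ 2 = 9 * 4 ^ k := by
      rw [mul_pow, ← pow_mul, mul_comm k, pow_mul]; norm_num
    rw [e]
    nlinarith [pow_succ 4 k]

theorem sum_choose_half (k : ℕ) :
    ∑ a ∈ ({k / 2, (k + 1) / 2} : Finset ℕ), k.choose a = ((k + 1) / 2).centralBinom := by
  obtain ⟨n, rfl | rfl⟩ := k.even_or_odd'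
  · rw [show (2 * n + 1) / 2 = n by omega, show 2 * n / 2 = n by omega, pair_eq_singleton,
      sum_singleton, centralBinom_eq_two_mul_choose]
  · rw [show (2 * n + 1 + 1) / 2 = n + 1 by omega, show (2 * n + 1) / 2 = n by omega,
      sum_pair (by omega), centralBinom_eq_two_mul_choose, show 2 * (n + 1) = 2 * n + 1 + 1 by ring]
    exact (choose_succ_succ' _ _).symm

end Nat

/-- The probability that a `Bin(k, 1/2)` variable lies in `{⌊k/2⌋, ⌈k/2⌉}`. -/
noncomputable def centralProb (k : ℕ) : ℝ := ((k + 1) / 2).centralBinom / 2 ^ k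

theorem centralProb_nonneg (k : ℕ) : 0 ≤ centralProb k := by
  unfold centralProb; positivity

theorem centralProb_pow_three_le {k : ℕ} (hk : 2 ≤ k) : centralProb k ^ 3 ≤ 1 / 2 := by
  have h : centralProb k ≤ 3 / 4 := by
    rw [centralProb, div_le_iff₀ (by positivity)]
    have h4 : (4 * ((k + 1) / 2).centralBinom : ℝ) ≤ 3 * 2 ^ k := by
      exact_mod_cast Nat.four_mul_centralBinom_half_le hk
    linarith
  calc centralProb k ^ 3 ≤ (3 / 4) ^ 3 := by gcongr; exact centralProb_nonneg k
    _ ≤ 1 / 2 := by norm_num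

theorem centralProb_pow_four_le {k L : ℕ} (hL : 4 ≤ L) (hk : 2 ^ L ≤ k ^ 2) :
    centralProb k ^ 4 ≤ (1 / 2) ^ (L - 4) := by
  have hsq : ((k + 1) / 2).centralBinom ^ 4 * 2 ^ L ≤ 2 ^ (4 * k) * 2 ^ 4 :=
    calc ((k + 1) / 2).centralBinom ^ 4 * 2 ^ L ≤ (((k + 1) / 2).centralBinom ^ 2 * k) ^ 2 := by
          rw [mul_pow, ← pow_mul]; gcongr
      _ ≤ (4 ^ (k + 1)) ^ 2 := by gcongr; exact Nat.centralBinom_half_sq_mul_le k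
      _ = 2 ^ (4 * k) * 2 ^ 4 := by
          rw [← pow_mul, ← pow_add, show (4 : ℕ) = 2 ^ 2 by rfl, ← pow_mul]; ring_nf
  have hsplit : 2 ^ L = 2 ^ (L - 4) * 2 ^ 4 := by rw [← pow_add, Nat.sub_add_cancel hL]
  have h : ((k + 1) / 2).centralBinom ^ 4 * 2 ^ (L - 4) ≤ 2 ^ (4 * k) := by
    rw [hsplit, ← mul_assoc] at hsq; exact Nat.le_of_mul_le_mul_right hsq (by positivity)
  rw [centralProb, div_pow, one_div_pow, div_le_div_iff₀ (by positivity) (by positivity), one_mul,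
    ← pow_mul, mul_comm k]
  exact_mod_cast h

theorem pow_le_half_pow_of_pow_le {q : ℝ} {n a m E : ℕ} (hq : 0 ≤ q) (hn : n ≠ 0)
    (h : q ^ n ≤ (1 / 2) ^ a) (hE : n * E ≤ a * m) : q ^ m ≤ (1 / 2) ^ E := by
  refine (pow_le_pow_iff_left₀ (by positivity) (by positivity) hn).mp ?_
  calc (q ^ m) ^ n = (q ^ n) ^ m := by rw [← pow_mul, ← pow_mul, mul_comm]
    _ ≤ ((1 / 2) ^ a) ^ m := by gcongr
    _ = (1 / 2) ^ (a * m) := by rw [← pow_mul]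
    _ ≤ (1 / 2) ^ (n * E) := pow_le_pow_of_le_one (by norm_num) (by norm_num) hE
    _ = ((1 / 2) ^ E) ^ n := by rw [← pow_mul, mul_comm]

theorem exists_forall_exists_notMem_of_sum_lt_one {α κ : Type*} [Fintype α] [Nonempty α]
    (s : Finset κ) (B : κ → Finset α) (m : ℕ)
    (h : ∑ i ∈ s, ((#(B i) : ℝ) / Fintype.card α) ^ m < 1) :
    ∃ x : Fin m → α, ∀ i ∈ s, ∃ j, x j ∉ B i := by
  classical
  by_contra! hcover
  have hsub : (univ : Finset (Fin m → α)) ⊆ s.biUnion fun i => Fintype.piFinset fun _ => B i :=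
    fun x _ => by
      obtain ⟨i, hi, hx⟩ := hcover x
      exact mem_biUnion.2 ⟨i, hi, Fintype.mem_piFinset.2 hx⟩
  have hcard : Fintype.card α ^ m ≤ ∑ i ∈ s, #(B i) ^ m := by
    simpa using (card_le_card hsub).trans card_biUnion_le
  refine h.not_ge ?_
  have hpos : (0 : ℝ) < Fintype.card α ^ m := by positivity
  simp_rw [div_pow, ← sum_div]
  rw [one_le_div hpos]
  exact_mod_cast hcard

section PartialAssignment

variable {ι : Type*} [Fintype ι]

def fixedCoords (p : ι → Option Bool) : Finset ι := {i | (p i).isSome}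

def agreeCoords (p : ι → Option Bool) (x : ι → Bool) : Finset ι := {i | p i = some (x i)}

/-- For `p = diffPattern u v` these are the `x` with `|δ(x, u) - δ(x, v)| ≤ 1`. -/
def balancedSet [DecidableEq ι] (p : ι → Option Bool) : Finset (ι → Bool) :=
  {x | #(agreeCoords p x) ∈ ({#(fixedCoords p) / 2, (#(fixedCoords p) + 1) / 2} : Finset ℕ)}

theorem agreeCoords_subset_fixedCoords (p : ι → Option Bool) (x : ι → Bool) :
    agreeCoords p x ⊆ fixedCoords p := by
  intro i hi
  simp_all [agreeCoords, fixedCoords]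

theorem card_filter_agreeCoords_eq [DecidableEq ι] {p : ι → Option Bool} {A : Finset ι}
    (hA : A ⊆ fixedCoords p) :
    #{x | agreeCoords p x = A} = 2 ^ (Fintype.card ι - #(fixedCoords p)) := by
  have hfilter : ({x | agreeCoords p x = A} : Finset (ι → Bool)) =
      Fintype.piFinset fun i => (p i).elim univ fun b => {if i ∈ A then b else !b} := by
    ext x
    simp only [mem_filter, mem_univ, true_and, Fintype.mem_piFinset, Finset.ext_iff, agreeCoords]
    refine forall_congr' fun i => ?_
    cases hp : p i with
    | none =>
      have : i ∉ A := fun h => by simpa [fixedCoords, hp] using hA h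
      simp [this]
    | some b => by_cases hi : i ∈ A <;> cases b <;> cases x i <;> simp [hi]
  rw [hfilter, Fintype.card_piFinset, ← card_compl, ← prod_const, fixedCoords, compl_filter,
    prod_filter]
  refine prod_congr rfl fun i _ => ?_
  cases p i <;> simp

theorem card_filter_card_agreeCoords_eq [DecidableEq ι] (p : ι → Option Bool) (a : ℕ) :
    #{x | #(agreeCoords p x) = a} =
      (#(fixedCoords p)).choose a * 2 ^ (Fintype.card ι - #(fixedCoords p)) := by
  rw [card_eq_sum_card_fiberwise (f := agreeCoords p) (t := (fixedCoords p).powersetCard a)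
    fun x hx => mem_powersetCard.2 ⟨agreeCoords_subset_fixedCoords p x, (mem_filter.1 hx).2⟩,
    ← card_powersetCard, card_eq_sum_ones, sum_mul]
  refine sum_congr rfl fun A hA => ?_
  rw [mem_powersetCard] at hA
  rw [filter_filter, one_mul, ← card_filter_agreeCoords_eq hA.1]
  congr 1
  refine filter_congr fun x _ => ⟨And.right, fun h => ⟨h ▸ hA.2, h⟩⟩

theorem card_balancedSet [DecidableEq ι] (p : ι → Option Bool) :
    #(balancedSet p) =
      ((#(fixedCoords p) + 1) / 2).centralBinom * 2 ^ (Fintype.card ι - #(fixedCoords p)) := by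
  rw [card_eq_sum_card_fiberwise (s := balancedSet p) (f := fun x => #(agreeCoords p x))
    (t := {#(fixedCoords p) / 2, (#(fixedCoords p) + 1) / 2}) fun x hx => (mem_filter.1 hx).2,
    ← Nat.sum_choose_half, sum_mul]
  refine sum_congr rfl fun a ha => ?_
  rw [balancedSet, filter_filter, ← card_filter_card_agreeCoords_eq]
  congr 1
  refine filter_congr fun x _ => ⟨And.right, fun h => ⟨h ▸ ha, h⟩⟩

theorem card_balancedSet_div [DecidableEq ι] (p : ι → Option Bool) :
    (#(balancedSet p) : ℝ) / 2 ^ Fintype.card ι = centralProb #(fixedCoords p) := by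
  have hsplit : (2 : ℝ) ^ Fintype.card ι =
      2 ^ #(fixedCoords p) * 2 ^ (Fintype.card ι - #(fixedCoords p)) := by
    rw [← pow_add, Nat.add_sub_cancel' (card_le_univ _)]
  rw [card_balancedSet, hsplit, centralProb]
  push_cast
  rw [mul_div_mul_right _ _ (by positivity)]

theorem sum_pow_card_fixedCoords [DecidableEq ι] (r : ℝ) :
    ∑ p : ι → Option Bool, r ^ #(fixedCoords p) = (1 + 2 * r) ^ Fintype.card ι := by
  have hprod (p : ι → Option Bool) : r ^ #(fixedCoords p) = ∏ i, (p i).elim 1 fun _ => r := by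
    rw [fixedCoords, ← prod_const, prod_filter]
    exact prod_congr rfl fun i _ => by cases p i <;> simp
  simp_rw [hprod]
  rw [← Fintype.prod_sum (fun (_ : ι) (o : Option Bool) => o.elim 1 fun _ => r)]
  simp

def diffPattern (u v : ι → Bool) : ι → Option Bool :=
  fun i => if u i = v i then none else some (u i)

theorem card_fixedCoords_diffPattern (u v : ι → Bool) :
    #(fixedCoords (diffPattern u v)) = hammingDist u v := by
  rw [hammingDist, fixedCoords]
  congr 1
  exact filter_congr fun i _ => by by_cases h : u i = v i <;> simp [diffPattern, h]

theorem hammingDist_sub_hammingDist (u v x : ι → Bool) :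
    (hammingDist x u : ℤ) - hammingDist x v =
      hammingDist u v - 2 * #(agreeCoords (diffPattern u v) x) := by
  simp only [hammingDist, agreeCoords, natCast_card_filter, mul_sum, ← sum_sub_distrib]
  refine sum_congr rfl fun i _ => ?_
  by_cases hu : u i <;> by_cases hv : v i <;> by_cases hx : x i <;> simp [diffPattern, hu, hv, hx]

theorem two_le_abs_hammingDist_sub_of_notMem_balancedSet [DecidableEq ι] {u v x : ι → Bool}
    (hx : x ∉ balancedSet (diffPattern u v)) :
    2 ≤ |(hammingDist x u : ℤ) - hammingDist x v| := by
  simp only [balancedSet, card_fixedCoords_diffPattern, mem_filter, mem_univ, true_and,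
    mem_insert, mem_singleton, not_or] at hx
  rw [hammingDist_sub_hammingDist, le_abs']
  omega

theorem sum_pow_card_fixedCoords_filter_le [DecidableEq ι] {r : ℝ} (hr : 0 ≤ r)
    (hnr : Fintype.card ι * (2 * r) ≤ 1 / 4) :
    ∑ p ∈ ({p | 2 ≤ #(fixedCoords p)} : Finset (ι → Option Bool)), r ^ #(fixedCoords p) ≤
      1 / 3 := by
  set n := Fintype.card ι
  set s : Finset (ι → Option Bool) := {p | 2 ≤ #(fixedCoords p)}
  have hs : s ⊆ univ.erase fun _ => none := fun p hp => by
    refine mem_erase.2 ⟨fun h => ?_, mem_univ p⟩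
    have h2 := (mem_filter.1 hp).2
    simp [h, fixedCoords] at h2
  calc ∑ p ∈ s, r ^ #(fixedCoords p)
      ≤ ∑ p ∈ univ.erase fun _ => none, r ^ #(fixedCoords p) :=
        sum_le_sum_of_subset_of_nonneg hs fun _ _ _ => by positivity
    _ = (1 + 2 * r) ^ n - 1 := by
        rw [sum_erase_eq_sub (mem_univ _), sum_pow_card_fixedCoords]; simp [fixedCoords, n]
    _ ≤ Real.exp (2 * r) ^ n - 1 := by
        gcongr; linarith [Real.add_one_le_exp (2 * r)]
    _ = Real.exp (n * (2 * r)) - 1 := by rw [Real.exp_nat_mul]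
    _ ≤ 1 / (1 - n * (2 * r)) - 1 := by
        gcongr; exact Real.exp_bound_div_one_sub_of_interval (by positivity) (by linarith)
    _ ≤ 1 / 3 := by
        rw [sub_le_iff_le_add, div_le_iff₀ (by linarith)]; nlinarith

theorem sum_weight_lt_one [DecidableEq ι] {L : ℕ} (hι : 0 < Fintype.card ι)
    (hL : Fintype.card ι < 2 ^ (L + 1)) :
    ∑ p ∈ ({p | 2 ≤ #(fixedCoords p)} : Finset (ι → Option Bool)),
      ((1 / 2 : ℝ) ^ ((L + 4) * #(fixedCoords p)) + (1 / 2) ^ (3 * Fintype.card ι)) < 1 := by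
  set n := Fintype.card ι
  set s : Finset (ι → Option Bool) := {p | 2 ≤ #(fixedCoords p)}
  have hnr : n * (2 * (1 / 2 : ℝ) ^ (L + 4)) ≤ 1 / 4 := by
    have : (n : ℝ) ≤ 2 ^ (L + 1) := by exact_mod_cast hL.le
    calc n * (2 * (1 / 2 : ℝ) ^ (L + 4)) ≤ 2 ^ (L + 1) * (2 * (1 / 2) ^ (L + 4)) := by gcongr
      _ = (2 * (1 / 2)) ^ (L + 1) * (2 * (1 / 2) ^ 3) := by
          rw [mul_pow, show L + 4 = L + 1 + 3 by ring, pow_add]; ring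
      _ = 1 / 4 := by norm_num
  have hsmall := sum_pow_card_fixedCoords_filter_le (by positivity) hnr
  have hlarge : ∑ _p ∈ s, (1 / 2 : ℝ) ^ (3 * n) ≤ 3 / 8 := by
    have hcard : (#s : ℝ) ≤ 3 ^ n := by
      exact_mod_cast (card_le_univ s).trans (by simp [n])
    calc ∑ _p ∈ s, (1 / 2 : ℝ) ^ (3 * n) = #s * (1 / 8) ^ n := by
          rw [sum_const, nsmul_eq_mul, pow_mul]; norm_num
      _ ≤ 3 ^ n * (1 / 8) ^ n := by gcongr
      _ = (3 / 8) ^ n := by rw [← mul_pow]; norm_num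
      _ ≤ 3 / 8 := pow_le_of_le_one (by norm_num) (by norm_num) hι.ne'
  simp only [pow_mul _ (L + 4)]
  rw [sum_add_distrib]
  linarith

end PartialAssignment

theorem pow_four_le_two_pow {L : ℕ} (hL : 16 ≤ L) : L ^ 4 ≤ 2 ^ L := by
  induction L, hL using Nat.le_induction with
  | base => norm_num
  | succ n hn ih =>
    have h16 : 16 * n ^ 3 ≤ n ^ 4 :=
      calc 16 * n ^ 3 ≤ n * n ^ 3 := Nat.mul_le_mul_right _ hn
        _ = n ^ 4 := by ring
    have h32 : n ^ 2 ≤ n ^ 3 := Nat.pow_le_pow_right (by omega) (by norm_num)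
    have h21 : n ≤ n ^ 2 := Nat.le_self_pow two_ne_zero n
    calc (n + 1) ^ 4 ≤ 2 * n ^ 4 := by nlinarith
      _ ≤ 2 ^ (n + 1) := by rw [pow_succ 2 n]; omega

theorem centralProb_pow_le {d L m k : ℕ} (hL : 16 ≤ L) (hdL : 2 ^ L ≤ d)
    (hm : 31 * d ≤ L * m) (hk : 2 ≤ k) :
    centralProb k ^ m ≤ (1 / 2) ^ ((L + 4) * k) + (1 / 2) ^ (3 * d) := by
  rcases le_or_gt (k ^ 2) d with hsmall | hlarge
  · have hLk : L ^ 2 * k ≤ d := by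
      refine (Nat.pow_le_pow_iff_left (n := 2) two_ne_zero).mp ?_
      calc (L ^ 2 * k) ^ 2 = L ^ 4 * k ^ 2 := by ring
        _ ≤ d * d := Nat.mul_le_mul ((pow_four_le_two_pow hL).trans hdL) hsmall
        _ = d ^ 2 := (sq d).symm
    have hE : 3 * ((L + 4) * k) ≤ 1 * m := by
      refine Nat.le_of_mul_le_mul_left ?_ (show 0 < L by omega)
      calc L * (3 * ((L + 4) * k)) = 3 * (L + 4) * (L * k) := by ring
        _ ≤ 4 * L * (L * k) := Nat.mul_le_mul_right _ (by omega)
        _ = 4 * (L ^ 2 * k) := by ring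
        _ ≤ L * (1 * m) := by rw [one_mul]; omega
    exact le_add_of_le_of_nonneg (pow_le_half_pow_of_pow_le (centralProb_nonneg k) three_ne_zero
      (by simpa using centralProb_pow_three_le hk) hE) (by positivity)
  · have hE : 4 * (3 * d) ≤ (L - 4) * m := by
      refine Nat.le_of_mul_le_mul_left ?_ (show 0 < 4 by norm_num)
      calc 4 * (4 * (3 * d)) ≤ 3 * L * m := by rw [mul_assoc]; omega
        _ ≤ 4 * (L - 4) * m := Nat.mul_le_mul_right _ (by omega)
        _ = 4 * ((L - 4) * m) := by ring
    exact le_add_of_nonneg_of_le (by positivity) (pow_le_half_pow_of_pow_le (centralProb_nonneg k)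
      four_ne_zero (centralProb_pow_four_le (by omega) (hdL.trans hlarge.le)) hE)

theorem exists_separating_tuple {ι : Type*} [Fintype ι] [DecidableEq ι] {m : ℕ}
    (hι : 2 ^ 16 ≤ Fintype.card ι)
    (hm : 31 * Fintype.card ι ≤ Nat.log 2 (Fintype.card ι) * m) :
    ∃ x : Fin m → ι → Bool, ∀ u v : ι → Bool, 2 ≤ hammingDist u v →
      ∃ j, 2 ≤ |(hammingDist (x j) u : ℤ) - hammingDist (x j) v| := by
  set n := Fintype.card ι
  set L := Nat.log 2 n
  have hn : n ≠ 0 := by positivity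
  have hL : 16 ≤ L := (Nat.le_log_iff_pow_le one_lt_two hn).2 hι
  obtain ⟨x, hx⟩ := exists_forall_exists_notMem_of_sum_lt_one
    ({p | 2 ≤ #(fixedCoords p)} : Finset (ι → Option Bool)) balancedSet m <| by
      calc ∑ p ∈ {p | 2 ≤ #(fixedCoords p)},
            ((#(balancedSet p) : ℝ) / Fintype.card (ι → Bool)) ^ m
          = ∑ p ∈ {p | 2 ≤ #(fixedCoords p)}, centralProb #(fixedCoords p) ^ m := by
            simp only [Fintype.card_fun, Fintype.card_bool, Nat.cast_pow, Nat.cast_ofNat,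
              card_balancedSet_div]
        _ ≤ ∑ p ∈ {p | 2 ≤ #(fixedCoords p)},
              ((1 / 2 : ℝ) ^ ((L + 4) * #(fixedCoords p)) + (1 / 2) ^ (3 * n)) :=
            sum_le_sum fun p hp => centralProb_pow_le hL (Nat.pow_log_le_self 2 hn) hm
              (mem_filter.1 hp).2
        _ < 1 :=
            sum_weight_lt_one (Nat.pos_of_ne_zero hn) (Nat.lt_pow_succ_log_self one_lt_two n)
  refine ⟨x, fun u v huv => ?_⟩
  obtain ⟨j, hj⟩ := hx (diffPattern u v) (by simpa [card_fixedCoords_diffPattern] using huv)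
  exact ⟨j, two_le_abs_hammingDist_sub_of_notMem_balancedSet hj⟩

theorem mul_le_log_mul_div_log {d : ℕ} (hd : 2 ≤ d) :
    31 * d ≤ Nat.log 2 d * (32 * d / Nat.log 2 d) := by
  have hpos := Nat.log_pos one_lt_two hd
  have hle := Nat.log_le_self 2 d
  have := Nat.div_add_mod (32 * d) (Nat.log 2 d)
  have := Nat.mod_lt (32 * d) hpos
  omega

theorem natCast_div_log_le_div_logb (c : ℕ) {d : ℕ} (hd : 2 ≤ d) :
    ((c * d / Nat.log 2 d : ℕ) : ℝ) ≤ 2 * c * d / Real.logb 2 d := by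
  have hL : (1 : ℝ) ≤ Nat.log 2 d := by exact_mod_cast Nat.log_pos one_lt_two hd
  have hlogb_pos : 0 < Real.logb 2 d := Real.logb_pos one_lt_two (by exact_mod_cast hd)
  have hlogb_le : Real.logb 2 d ≤ 2 * Nat.log 2 d := by
    have := Nat.lt_floor_add_one (Real.logb 2 d)
    rw [show (2 : ℝ) = (2 : ℕ) by norm_num, Real.natFloor_logb_natCast] at this
    push_cast at this
    linarith
  calc ((c * d / Nat.log 2 d : ℕ) : ℝ)
      ≤ (c * d : ℕ) / (Nat.log 2 d : ℝ) := Nat.cast_div_le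
    _ = 2 * c * d / (2 * Nat.log 2 d) := by push_cast; field_simp
    _ ≤ 2 * c * d / Real.logb 2 d := by gcongr

theorem exists_small_separating_set :
    ∃ c : ℝ, 0 < c ∧ ∃ d₀ : ℕ, ∀ d : ℕ, d₀ ≤ d →
      ∃ S : Finset (Fin d → Bool),
        (S.card : ℝ) ≤ c * d / Real.logb 2 d ∧
        ∀ u v : Fin d → Bool, 2 ≤ hammingDist u v →
          ∃ x ∈ S, 2 ≤ |(hammingDist x u : ℤ) - (hammingDist x v : ℤ)| := by
  refine ⟨64, by norm_num, 2 ^ 16, fun d hd => ?_⟩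
  have hd2 : 2 ≤ d := le_trans (by norm_num) hd
  obtain ⟨x, hx⟩ := exists_separating_tuple (ι := Fin d) (m := 32 * d / Nat.log 2 d)
    (by rwa [Fintype.card_fin]) (by rw [Fintype.card_fin]; exact mul_le_log_mul_div_log hd2)
  refine ⟨univ.image x, ?_, fun u v huv => ?_⟩
  · calc (#(univ.image x) : ℝ) ≤ (32 * d / Nat.log 2 d : ℕ) := by
          exact_mod_cast card_image_le.trans (by simp)
      _ ≤ 2 * 32 * d / Real.logb 2 d := natCast_div_log_le_div_logb 32 hd2
      _ = 64 * d / Real.logb 2 d := by norm_num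
  · obtain ⟨j, hj⟩ := hx u v huv
    exact ⟨x j, mem_image_of_mem x (mem_univ j), hj⟩
end
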